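/- For all integers n ≥ 0 and k ≥ 0, b_{2k+1}(8n+5) ≡ 0 (mod 8), where b_m denotes the overcubic partition m-tuples function. -/

import Mathlib

open PowerSeries

/-- Truncated version of `fₖ = ∏_{i≥1} (1 - q^{k i})`: the product over `1 ≤ i ≤ N`,
which has the same coefficients as the infinite product in degrees `≤ N`. -/
noncomputable def fTrunc (k N : ℕ) : PowerSeries ℤ :=
  ∏ i ∈ Finset.Icc 1 N, (1 - (PowerSeries.X : PowerSeries ℤ) ^ (k * i))

/-- `b m n` is the `n`-th coefficient of `f₄ᵐ / (f₁^{2m} f₂ᵐ)`, the number of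
overcubic partition `m`-tuples of `n`. -/
noncomputable def b (m n : ℕ) : ℤ :=
  PowerSeries.coeff n
    ((fTrunc 4 n) ^ m * PowerSeries.invOfUnit ((fTrunc 1 n) ^ (2 * m) * (fTrunc 2 n) ^ m) 1)

/-!
By Gauss's identity `f₁² / f₂ = φ(-q)`, where `φ(-q) = ∑_{j ∈ ℤ} (-1)^j q^{j^2}`, applied at `q` and
at `q²`, the generating function of `b_m` is `(φ(-q) φ(-q²))^{-m}`. Gauss's identity modulo
`q^{n+1}` comes from its finite form `(q; q²)_n² = ∑_{|j| ≤ n} (-1)^j q^{j^2} [2n, n+j]_{q²}`, a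
specialisation of the `q`-binomial theorem, since `[2n, n+j]_{q²} (q²; q²)_n ≡ 1` modulo a high
power of `q`.

Write `φ(-q) φ(-q²) = 1 + 2u`. For `N ≡ 5 (mod 8)` the series `u` has no term in `q^N`, as `N` is
neither a square, nor twice a square, nor of the form `x² + 2y²`. Modulo 8 the inverse of `1 + 2u`
is `1 + 2w` with `w = 2u² - u`, so `(1 + 2u)^{-m} ≡ 1 + 2mw + 4 binom(m, 2) w²`; for odd `N` the
coefficient of `q^N` in a square is even, and everything vanishes modulo 8.
-/

open Finset

section QSeries

variable {A : Type*} [CommRing A]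

theorem isCoprime_of_dvd_sub_one {q u : A} (h : q ∣ u - 1) : IsCoprime q u := by
  obtain ⟨c, hc⟩ := h
  exact ⟨-c, 1, by linear_combination hc⟩

theorem dvd_of_dvd_mul_of_dvd_sub_one {q u x : A} {a : ℕ} (hu : q ∣ u - 1) (h : q ^ a ∣ x * u) :
    q ^ a ∣ x :=
  (isCoprime_of_dvd_sub_one hu).pow_left.dvd_of_dvd_mul_right h

/-- The `q`-Pochhammer symbol `(q; q)_n`. -/
def qPochhammer (q : A) (n : ℕ) : A := ∏ i ∈ Icc 1 n, (1 - q ^ i)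

@[simp]
theorem qPochhammer_zero (q : A) : qPochhammer q 0 = 1 := by simp [qPochhammer]

theorem qPochhammer_succ (q : A) (n : ℕ) :
    qPochhammer q (n + 1) = qPochhammer q n * (1 - q ^ (n + 1)) :=
  prod_Icc_succ_top (by omega) _

theorem pow_succ_dvd_qPochhammer_sub (q : A) {c a : ℕ} (h : c ≤ a) :
    q ^ (c + 1) ∣ qPochhammer q a - qPochhammer q c := by
  induction a, h using Nat.le_induction with
  | base => simp
  | succ a hca ih =>
    rw [qPochhammer_succ, show qPochhammer q a * (1 - q ^ (a + 1)) - qPochhammer q c =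
      (qPochhammer q a - qPochhammer q c) - q ^ (a + 1) * qPochhammer q a by ring]
    exact dvd_sub ih ((pow_dvd_pow q (by omega)).mul_right _)

def gaussBinom (p : A) : ℕ → ℕ → A
  | _, 0 => 1
  | 0, _ + 1 => 0
  | m + 1, k + 1 => p ^ (k + 1) * gaussBinom p m (k + 1) + gaussBinom p m k

@[simp]
theorem gaussBinom_zero_right (p : A) (m : ℕ) : gaussBinom p m 0 = 1 := by
  cases m <;> rfl

theorem gaussBinom_succ_succ (p : A) (m k : ℕ) :
    gaussBinom p (m + 1) (k + 1) = p ^ (k + 1) * gaussBinom p m (k + 1) + gaussBinom p m k :=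
  rfl

theorem gaussBinom_eq_zero_of_lt (p : A) : ∀ {m k : ℕ}, m < k → gaussBinom p m k = 0
  | 0, _ + 1, _ => rfl
  | m + 1, k + 1, h => by
    rw [gaussBinom_succ_succ, gaussBinom_eq_zero_of_lt p (by omega : m < k + 1),
      gaussBinom_eq_zero_of_lt p (by omega : m < k), mul_zero, add_zero]

@[simp]
theorem gaussBinom_self (p : A) : ∀ m : ℕ, gaussBinom p m m = 1
  | 0 => rfl
  | m + 1 => by
    rw [gaussBinom_succ_succ, gaussBinom_eq_zero_of_lt p m.lt_succ_self, gaussBinom_self p m,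
      mul_zero, zero_add]

theorem gaussBinom_mul_qPochhammer_mul_qPochhammer (p : A) : ∀ k j : ℕ,
    gaussBinom p (k + j) k * (qPochhammer p k * qPochhammer p j) = qPochhammer p (k + j)
  | 0, j => by simp
  | k + 1, 0 => by simp
  | k + 1, j + 1 => by
    have ih₁ := gaussBinom_mul_qPochhammer_mul_qPochhammer p (k + 1) j
    have ih₂ := gaussBinom_mul_qPochhammer_mul_qPochhammer p k (j + 1)
    rw [show k + 1 + j = k + j + 1 by omega, qPochhammer_succ p k] at ih₁
    rw [show k + (j + 1) = k + j + 1 by omega, qPochhammer_succ p j] at ih₂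
    rw [show k + 1 + (j + 1) = k + j + 1 + 1 by omega, gaussBinom_succ_succ,
      qPochhammer_succ p (k + j + 1), qPochhammer_succ p k, qPochhammer_succ p j]
    linear_combination (p ^ (k + 1) * (1 - p ^ (j + 1))) * ih₁ + (1 - p ^ (k + 1)) * ih₂

theorem prod_sub_pow_mul_eq_sum_gaussBinom (p x : A) (m : ℕ) : ∀ y : A,
    ∏ i ∈ range m, (x - p ^ i * y) =
      ∑ k ∈ range (m + 1),
        (-1) ^ k * p ^ k.choose 2 * gaussBinom p m k * x ^ (m - k) * y ^ k := by
  induction m with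
  | zero => simp
  | succ m ih =>
    intro y
    -- the coefficient of `x ^ (m - k)` in the expansion of `∏ i < m, (x - p ^ i * (p * y))`
    set f : ℕ → A := fun k => (-1) ^ k * p ^ k.choose 2 * gaussBinom p m k * p ^ k * y ^ k
    have hshift :
        ∏ i ∈ range m, (x - p ^ (i + 1) * y) = ∏ i ∈ range m, (x - p ^ i * (p * y)) := by
      simp_rw [pow_succ, mul_assoc]
    have hih : ∑ k ∈ range (m + 1),
        (-1) ^ k * p ^ k.choose 2 * gaussBinom p m k * x ^ (m - k) * (p * y) ^ k =
          ∑ k ∈ range (m + 1), f k * x ^ (m - k) := by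
      refine sum_congr rfl fun k _ => ?_
      simp only [f, mul_pow]
      ring
    have hterm : ∀ k ∈ range (m + 1),
        (-1) ^ (k + 1) * p ^ (k + 1).choose 2 * gaussBinom p (m + 1) (k + 1) *
          x ^ (m + 1 - (k + 1)) * y ^ (k + 1) =
        f (k + 1) * x ^ (m - k) - y * (f k * x ^ (m - k)) := by
      intro k _
      simp only [f, gaussBinom_succ_succ, Nat.choose_succ_succ', Nat.choose_one_right,
        Nat.add_sub_add_right]
      ring
    have hx : (∑ k ∈ range (m + 1), f k * x ^ (m - k)) * x =
        x ^ (m + 1) + ∑ k ∈ range (m + 1), f (k + 1) * x ^ (m - k) := by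
      have hf₀ : f 0 = 1 := by simp [f]
      have hf_top : f (m + 1) = 0 := by simp [f, gaussBinom_eq_zero_of_lt p m.lt_succ_self]
      rw [sum_range_succ', sum_range_succ, hf₀, hf_top, add_mul, sum_mul, zero_mul, add_zero,
        Nat.sub_zero, one_mul, ← pow_succ, add_comm]
      congr 1
      refine sum_congr rfl fun k hk => ?_
      rw [mul_assoc, ← pow_succ, show m - (k + 1) + 1 = m - k by grind]
    rw [prod_range_succ', hshift, ih, hih, pow_zero, one_mul]
    conv_rhs => rw [sum_range_succ', sum_congr rfl hterm, sum_sub_distrib, ← mul_sum]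
    simp only [pow_zero, Nat.choose_zero_succ, gaussBinom_zero_right, Nat.sub_zero, mul_one,
      one_mul]
    linear_combination hx

theorem prod_range_two_mul_sub_pow (q : A) (n : ℕ) :
    ∏ i ∈ range (2 * n), (q ^ (2 * n - 1) - q ^ (2 * i)) =
      (-1) ^ n * q ^ (n * (n - 1)) * (q ^ (2 * n - 1)) ^ n *
        (∏ i ∈ range n, (1 - q ^ (2 * i + 1))) ^ 2 := by
  have hlow : ∀ i ∈ range n, q ^ (2 * n - 1) - q ^ (2 * (n - 1 - i)) =
      -q ^ (2 * (n - 1 - i)) * (1 - q ^ (2 * i + 1)) := by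
    intro i hi
    rw [mem_range] at hi
    rw [show 2 * n - 1 = 2 * (n - 1 - i) + (2 * i + 1) by omega, pow_add]
    ring
  have hhigh : ∀ i ∈ range n, q ^ (2 * n - 1) - q ^ (2 * (n + i)) =
      q ^ (2 * n - 1) * (1 - q ^ (2 * i + 1)) := by
    intro i hi
    rw [mem_range] at hi
    rw [show 2 * (n + i) = 2 * n - 1 + (2 * i + 1) by omega, pow_add]
    ring
  have hsigns : ∏ i ∈ range n, -q ^ (2 * (n - 1 - i)) = (-1) ^ n * q ^ (n * (n - 1)) := by
    rw [prod_range_reflect (fun i => -q ^ (2 * i)) n, prod_neg, prod_pow_eq_pow_sum, card_range,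
      ← mul_sum, mul_comm 2, sum_range_id_mul_two]
  rw [show range (2 * n) = range (n + n) by rw [two_mul], prod_range_add,
    ← prod_range_reflect (fun i => q ^ (2 * n - 1) - q ^ (2 * i)) n,
    prod_congr rfl hlow, prod_congr rfl hhigh, prod_mul_distrib, prod_mul_distrib, hsigns,
    prod_const, card_range]
  ring

theorem two_mul_choose_two_add_mul_sub (n k : ℕ) (hk : k ≤ 2 * n) :
    2 * k.choose 2 + (2 * n - 1) * (2 * n - k) =
      n * (n - 1) + (2 * n - 1) * n + Nat.dist k n ^ 2 := by
  rw [Nat.choose_two_right, Nat.two_mul_div_two_of_even (Nat.even_mul_pred_self k)]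
  rcases Nat.eq_zero_or_pos n with rfl | hn
  · obtain rfl : k = 0 := by omega
    rfl
  have hdist : (Nat.dist k n : ℤ) ^ 2 = ((k : ℤ) - n) ^ 2 := by
    rcases le_total k n with h | h
    · rw [Nat.dist_eq_sub_of_le h]; push_cast [h]; ring
    · rw [Nat.dist_eq_sub_of_le_right h]; push_cast [h]; ring
  have hn₁ : 1 ≤ n := hn
  have h2n : 1 ≤ 2 * n := by omega
  rcases Nat.eq_zero_or_pos k with rfl | hk₀
  · simp only [Nat.zero_sub, mul_zero, zero_add, Nat.sub_zero]
    zify [hn₁, h2n] at hdist ⊢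
    rw [hdist]; ring
  · have hk₁ : 1 ≤ k := hk₀
    zify [hn₁, h2n, hk, hk₁] at hdist ⊢
    rw [hdist]; ring

theorem prod_one_sub_odd_pow_sq_eq_sum [IsDomain A] {q : A} (hq : q ≠ 0) (n : ℕ) :
    (∏ i ∈ range n, (1 - q ^ (2 * i + 1))) ^ 2 =
      ∑ k ∈ range (2 * n + 1),
        (-1) ^ (k + n) * q ^ (Nat.dist k n ^ 2) * gaussBinom (q ^ 2) (2 * n) k := by
  have h := prod_sub_pow_mul_eq_sum_gaussBinom (q ^ 2) (q ^ (2 * n - 1)) (2 * n) 1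
  simp only [mul_one, one_pow, ← pow_mul] at h
  rw [prod_range_two_mul_sub_pow] at h
  have hc : ((-1) ^ n * q ^ (n * (n - 1)) * (q ^ (2 * n - 1)) ^ n : A) ≠ 0 := by simp [hq]
  refine mul_left_cancel₀ hc ?_
  rw [h, mul_sum]
  refine sum_congr rfl fun k hk => ?_
  have hexp := two_mul_choose_two_add_mul_sub n k (by rw [mem_range] at hk; omega)
  have hpow : q ^ (2 * k.choose 2) * q ^ ((2 * n - 1) * (2 * n - k)) =
      q ^ (n * (n - 1)) * (q ^ (2 * n - 1)) ^ n * q ^ (Nat.dist k n ^ 2) := by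
    rw [← pow_mul, ← pow_add, ← pow_add, ← pow_add, hexp]
  have hsign : (-1 : A) ^ k = (-1) ^ n * (-1) ^ (k + n) := by
    rw [← pow_add, show n + (k + n) = k + 2 * n by ring, pow_add, pow_mul, neg_one_sq, one_pow,
      mul_one]
  linear_combination (gaussBinom (q ^ 2) (2 * n) k * (-1) ^ k) * hpow +
    (gaussBinom (q ^ 2) (2 * n) k * q ^ (n * (n - 1)) * (q ^ (2 * n - 1)) ^ n *
      q ^ (Nat.dist k n ^ 2)) * hsign

theorem pow_succ_dvd_gaussBinom_mul_qPochhammer_sub_one (p : A) {k j a c : ℕ} (hk : c ≤ k)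
    (hj : c ≤ j) (ha : c ≤ a) :
    p ^ (c + 1) ∣ gaussBinom p (k + j) k * qPochhammer p a - 1 := by
  have hunit : p ∣ qPochhammer p k * qPochhammer p j - 1 := by
    simpa using dvd_mul_sub_mul (pow_succ_dvd_qPochhammer_sub p (Nat.zero_le k))
      (pow_succ_dvd_qPochhammer_sub p (Nat.zero_le j))
  refine dvd_of_dvd_mul_of_dvd_sub_one hunit ?_
  have key :
      (gaussBinom p (k + j) k * qPochhammer p a - 1) * (qPochhammer p k * qPochhammer p j) =
      (qPochhammer p (k + j) * qPochhammer p a - qPochhammer p c * qPochhammer p c) -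
        (qPochhammer p k * qPochhammer p j - qPochhammer p c * qPochhammer p c) := by
    rw [← gaussBinom_mul_qPochhammer_mul_qPochhammer]
    ring
  rw [key]
  exact dvd_sub
    (dvd_mul_sub_mul (pow_succ_dvd_qPochhammer_sub p (by omega))
      (pow_succ_dvd_qPochhammer_sub p ha))
    (dvd_mul_sub_mul (pow_succ_dvd_qPochhammer_sub p hk) (pow_succ_dvd_qPochhammer_sub p hj))

/-- Partial sum of `φ(-q) = ∑_{j ∈ ℤ} (-1)^j q^{j^2}`. -/
def thetaTrunc (q : A) (n : ℕ) : A := 1 + 2 * ∑ j ∈ Icc 1 n, (-1) ^ j * q ^ (j ^ 2)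

theorem sum_range_neg_one_pow_mul_pow_dist_sq (q : A) (n : ℕ) :
    ∑ k ∈ range (2 * n + 1), (-1) ^ (k + n) * q ^ (Nat.dist k n ^ 2) = thetaTrunc q n := by
  induction n with
  | zero => simp [thetaTrunc]
  | succ n ih =>
    have hshift : ∀ k ∈ range (2 * n + 1), (-1 : A) ^ (k + 1 + (n + 1)) *
        q ^ (Nat.dist (k + 1) (n + 1) ^ 2) = (-1) ^ (k + n) * q ^ (Nat.dist k n ^ 2) := by
      intro k _
      rw [Nat.dist_succ_succ, show k + 1 + (n + 1) = k + n + 2 by ring, pow_add _ (k + n) 2,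
        neg_one_sq, mul_one]
    have htop : Nat.dist (2 * n + 1 + 1) (n + 1) = n + 1 := by unfold Nat.dist; omega
    have hbot : Nat.dist 0 (n + 1) = n + 1 := by unfold Nat.dist; omega
    have hsign : (-1 : A) ^ (2 * n + 1 + 1 + (n + 1)) = (-1) ^ (n + 1) := by
      rw [show 2 * n + 1 + 1 + (n + 1) = n + 1 + 2 * (n + 1) by ring, pow_add, pow_mul, neg_one_sq,
        one_pow, mul_one]
    rw [show 2 * (n + 1) + 1 = 2 * n + 1 + 1 + 1 by ring, sum_range_succ', sum_range_succ,
      sum_congr rfl hshift, ih, htop, hbot, hsign, zero_add, thetaTrunc, thetaTrunc,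
      sum_Icc_succ_top (by omega)]
    ring

theorem prod_one_sub_odd_pow_mul_qPochhammer_sq (q : A) (n : ℕ) :
    (∏ i ∈ range n, (1 - q ^ (2 * i + 1))) * qPochhammer (q ^ 2) n = qPochhammer q (2 * n) := by
  induction n with
  | zero => simp
  | succ n ih =>
    rw [prod_range_succ, qPochhammer_succ, show 2 * (n + 1) = 2 * n + 1 + 1 by ring,
      qPochhammer_succ, qPochhammer_succ, ← ih, ← pow_mul]
    ring

theorem pow_succ_dvd_pow_dist_sq_mul_gaussBinom_mul_qPochhammer_sub_one (q : A) {n k : ℕ}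
    (hk : k ≤ 2 * n) : q ^ (n + 1) ∣
      q ^ (Nat.dist k n ^ 2) * (gaussBinom (q ^ 2) (2 * n) k * qPochhammer (q ^ 2) n - 1) := by
  obtain ⟨j, hj⟩ : ∃ j, 2 * n = k + j := ⟨2 * n - k, by omega⟩
  obtain ⟨c, hc⟩ : ∃ c, c + Nat.dist k n = n := ⟨n - Nat.dist k n, by unfold Nat.dist; omega⟩
  have hcong := pow_succ_dvd_gaussBinom_mul_qPochhammer_sub_one (q ^ 2) (a := n) (c := c)
    (k := k) (j := j) (by unfold Nat.dist at hc; omega) (by unfold Nat.dist at hc; omega) (by omega)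
  rw [← hj, ← pow_mul] at hcong
  have hle : n + 1 ≤ Nat.dist k n ^ 2 + 2 * (c + 1) := by nlinarith
  exact (pow_dvd_pow q hle).trans (pow_add q _ _ ▸ mul_dvd_mul_left _ hcong)

theorem pow_succ_dvd_prod_one_sub_odd_pow_sq_mul_qPochhammer_sub [IsDomain A] {q : A} (hq : q ≠ 0)
    (n : ℕ) : q ^ (n + 1) ∣
      (∏ i ∈ range n, (1 - q ^ (2 * i + 1))) ^ 2 * qPochhammer (q ^ 2) n - thetaTrunc q n := by
  rw [prod_one_sub_odd_pow_sq_eq_sum hq, ← sum_range_neg_one_pow_mul_pow_dist_sq, sum_mul,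
    ← sum_sub_distrib]
  refine dvd_sum fun k hk => ?_
  have h := pow_succ_dvd_pow_dist_sq_mul_gaussBinom_mul_qPochhammer_sub_one q
    (by rw [mem_range] at hk; omega : k ≤ 2 * n)
  convert dvd_mul_of_dvd_right h ((-1) ^ (k + n)) using 1
  ring

theorem pow_succ_dvd_qPochhammer_sq_sub [IsDomain A] {q : A} (hq : q ≠ 0) (n : ℕ) :
    q ^ (n + 1) ∣ qPochhammer q n ^ 2 - qPochhammer (q ^ 2) n * thetaTrunc q n := by
  set O := ∏ i ∈ range n, (1 - q ^ (2 * i + 1))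
  have hgauss := pow_succ_dvd_prod_one_sub_odd_pow_sq_mul_qPochhammer_sub hq n
  have hsplit : q ^ (n + 1) ∣ qPochhammer q n - O * qPochhammer (q ^ 2) n := by
    rw [prod_one_sub_odd_pow_mul_qPochhammer_sq, dvd_sub_comm]
    exact pow_succ_dvd_qPochhammer_sub q (by omega)
  rw [show qPochhammer q n ^ 2 - qPochhammer (q ^ 2) n * thetaTrunc q n =
    (qPochhammer q n - O * qPochhammer (q ^ 2) n) *
        (qPochhammer q n + O * qPochhammer (q ^ 2) n) +
      qPochhammer (q ^ 2) n * (O ^ 2 * qPochhammer (q ^ 2) n - thetaTrunc q n) by ring]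
  exact dvd_add (hsplit.mul_right _) (hgauss.mul_left _)

end QSeries

theorem fTrunc_eq_qPochhammer (k N : ℕ) : fTrunc k N = qPochhammer (X ^ k) N := by
  simp only [fTrunc, qPochhammer, pow_mul]

theorem constantCoeff_fTrunc {k : ℕ} (hk : k ≠ 0) (N : ℕ) : constantCoeff (fTrunc k N) = 1 := by
  rw [fTrunc, map_prod]
  refine prod_eq_one fun i hi => ?_
  rw [mem_Icc] at hi
  simp [zero_pow (Nat.mul_ne_zero hk (by omega : i ≠ 0))]

theorem X_pow_dvd_fTrunc_sq_sub {k : ℕ} (hk : k ≠ 0) (N : ℕ) :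
    X ^ (N + 1) ∣ fTrunc k N ^ 2 - fTrunc (2 * k) N * thetaTrunc (X ^ k) N := by
  have h := pow_succ_dvd_qPochhammer_sq_sub (pow_ne_zero k (X_ne_zero (R := ℤ))) N
  rw [← pow_mul, ← pow_mul, mul_comm k 2] at h
  rw [fTrunc_eq_qPochhammer, fTrunc_eq_qPochhammer]
  exact (pow_dvd_pow X (by nlinarith [Nat.one_le_iff_ne_zero.mpr hk])).trans h

theorem X_pow_dvd_mul_thetaTrunc_pow_sub_one (m N : ℕ) :
    X ^ (N + 1) ∣ fTrunc 4 N ^ m * invOfUnit (fTrunc 1 N ^ (2 * m) * fTrunc 2 N ^ m) 1 *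
      (thetaTrunc X N * thetaTrunc (X ^ 2) N) ^ m - 1 := by
  set D := fTrunc 1 N ^ (2 * m) * fTrunc 2 N ^ m
  set π := Ideal.Quotient.mk (Ideal.span {(X : ℤ⟦X⟧) ^ (N + 1)})
  have hπ {f g : ℤ⟦X⟧} (h : X ^ (N + 1) ∣ f - g) : π f = π g :=
    Ideal.Quotient.eq.mpr (Ideal.mem_span_singleton.mpr h)
  rw [← Ideal.mem_span_singleton, ← Ideal.Quotient.eq, map_one]
  have h₁ := hπ (X_pow_dvd_fTrunc_sq_sub one_ne_zero N)
  have h₂ := hπ (X_pow_dvd_fTrunc_sq_sub two_ne_zero N)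
  have hinv : π D * π (invOfUnit D 1) = 1 := by
    rw [← map_mul, mul_invOfUnit _ _ (by simp [D, constantCoeff_fTrunc]), map_one]
  have hunit : IsUnit (π (fTrunc 4 N)) :=
    (isUnit_iff_constantCoeff.mpr (by simp [constantCoeff_fTrunc])).map π
  simp only [pow_one, Nat.reduceMul, D, map_mul, map_pow] at h₁ h₂ hinv ⊢
  have hD : π (fTrunc 1 N) ^ (2 * m) * π (fTrunc 2 N) ^ m =
      π (fTrunc 4 N) ^ m * (π (thetaTrunc X N) * π (thetaTrunc (X ^ 2) N)) ^ m := by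
    calc π (fTrunc 1 N) ^ (2 * m) * π (fTrunc 2 N) ^ m
        = (π (fTrunc 1 N) ^ 2) ^ m * π (fTrunc 2 N) ^ m := by rw [pow_mul]
      _ = (π (fTrunc 2 N) ^ 2) ^ m * π (thetaTrunc X N) ^ m := by rw [h₁]; ring
      _ = _ := by rw [h₂]; ring
  refine (hunit.pow m).mul_left_cancel ?_
  linear_combination (-π (fTrunc 4 N) ^ m * π (invOfUnit D 1)) * hD + π (fTrunc 4 N) ^ m * hinv

theorem even_coeff_sq_of_odd {R : Type*} [CommSemiring R] (f : R⟦X⟧) {N : ℕ} (hN : Odd N) :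
    Even (coeff N (f ^ 2)) := by
  obtain ⟨r, rfl⟩ := hN
  rw [sq, coeff_mul, Nat.sum_antidiagonal_eq_sum_range_succ_mk,
    show (2 * r + 1).succ = (r + 1) + (r + 1) by omega, sum_range_add]
  refine ⟨∑ i ∈ range (r + 1), coeff i f * coeff (2 * r + 1 - i) f, congrArg _ ?_⟩
  rw [← sum_range_reflect]
  refine sum_congr rfl fun i hi => ?_
  rw [mem_range] at hi
  rw [mul_comm, show r + 1 + (r + 1 - 1 - i) = 2 * r + 1 - i by omega,
    show 2 * r + 1 - (2 * r + 1 - i) = i by omega]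

theorem one_add_two_mul_pow_of_eight_eq_zero {S : Type*} [CommRing S] (h8 : (8 : S) = 0) (w : S)
    (m : ℕ) : (1 + 2 * w) ^ m = 1 + ((2 * m : ℕ) : S) * w + ((4 * m.choose 2 : ℕ) : S) * w ^ 2 := by
  induction m with
  | zero => simp
  | succ m ih =>
    rw [pow_succ, ih, Nat.choose_succ_succ', Nat.choose_one_right]
    push_cast
    linear_combination (m.choose 2 * w ^ 3) * h8

theorem coeff_eq_zero_of_X_pow_dvd_mul_one_add_two_mul_pow_sub_one {R : Type*} [CommRing R]
    (h8 : (8 : R) = 0) {N m : ℕ} (hN : Odd N) {u F : R⟦X⟧} (hu : coeff N u = 0)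
    (hF : X ^ (N + 1) ∣ F * (1 + 2 * u) ^ m - 1) : coeff N F = 0 := by
  have h8' : (8 : R⟦X⟧) = 0 := by rw [← map_ofNat C 8, h8, map_zero]
  set w := 2 * u ^ 2 - u
  have hinv : (1 + 2 * u) * (1 + 2 * w) = 1 := by linear_combination u ^ 3 * h8'
  have hFw : X ^ (N + 1) ∣ F - (1 + 2 * w) ^ m := by
    rw [show F - (1 + 2 * w) ^ m = (F * (1 + 2 * u) ^ m - 1) * (1 + 2 * w) ^ m by
      rw [sub_mul, mul_assoc, ← mul_pow, hinv, one_pow, mul_one, one_mul]]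
    exact hF.mul_right _
  have hcoeff : coeff N F = coeff N ((1 + 2 * w) ^ m) :=
    sub_eq_zero.mp (by rw [← map_sub]; exact X_pow_dvd_iff.mp hFw N N.lt_succ_self)
  have hw : coeff N w = 2 * coeff N (u ^ 2) := by
    rw [map_sub, hu, sub_zero, ← map_ofNat (C (R := R)) 2, coeff_C_mul]
  have hexpand : coeff N (1 + ((2 * m : ℕ) : R⟦X⟧) * w + ((4 * m.choose 2 : ℕ) : R⟦X⟧) * w ^ 2) =
      ((2 * m : ℕ) : R) * coeff N w + ((4 * m.choose 2 : ℕ) : R) * coeff N (w ^ 2) := by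
    rw [← map_natCast (C (R := R)), ← map_natCast (C (R := R)), map_add, map_add, coeff_C_mul,
      coeff_C_mul, coeff_one, if_neg hN.pos.ne', zero_add]
  obtain ⟨c, hc⟩ := even_coeff_sq_of_odd u hN
  obtain ⟨c', hc'⟩ := even_coeff_sq_of_odd w hN
  rw [hcoeff, one_add_two_mul_pow_of_eight_eq_zero h8' w m, hexpand, hw, hc, hc']
  push_cast
  linear_combination (m * c + m.choose 2 * c') * h8

theorem coeff_sum_C_mul_X_pow_eq_zero {R ι : Type*} [Semiring R] (s : Finset ι) (c : ι → R)
    (e : ι → ℕ) {a : ℕ} (h : ∀ i ∈ s, e i ≠ a) : coeff a (∑ i ∈ s, C (c i) * X ^ e i) = 0 := by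
  simp only [map_sum, coeff_C_mul_X_pow]
  exact sum_eq_zero fun i hi => if_neg (h i hi).symm

theorem coeff_mul_eq_zero_of_forall {R : Type*} [Semiring R] {f g : R⟦X⟧} {a : ℕ}
    (h : ∀ i j, i + j = a → coeff i f = 0 ∨ coeff j g = 0) : coeff a (f * g) = 0 := by
  rw [coeff_mul]
  refine sum_eq_zero fun ij hij => ?_
  rcases h ij.1 ij.2 (mem_antidiagonal.mp hij) with h | h <;> simp [h]

theorem sq_add_two_mul_sq_mod_eight_ne_five (x y : ℕ) : (x ^ 2 + 2 * y ^ 2) % 8 ≠ 5 := by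
  intro h
  have h8 : ((x ^ 2 + 2 * y ^ 2 : ℕ) : ZMod 8) = 5 := by
    rw [← ZMod.natCast_mod, h]; rfl
  push_cast at h8
  revert h8
  generalize (x : ZMod 8) = x'
  generalize (y : ZMod 8) = y'
  revert x' y'
  decide

theorem exists_thetaTrunc_mul_thetaTrunc_eq_one_add_two_mul (N a : ℕ) (ha : a % 8 = 5) :
    ∃ u : ℤ⟦X⟧, thetaTrunc X N * thetaTrunc (X ^ 2) N = 1 + 2 * u ∧ coeff a u = 0 := by
  set G : ℤ⟦X⟧ := ∑ j ∈ Icc 1 N, C ((-1) ^ j) * X ^ (j ^ 2)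
  set H : ℤ⟦X⟧ := ∑ j ∈ Icc 1 N, C ((-1) ^ j) * X ^ (2 * j ^ 2)
  have hG : thetaTrunc X N = 1 + 2 * G := by simp [thetaTrunc, G]
  have hH : thetaTrunc (X ^ 2) N = 1 + 2 * H := by simp [thetaTrunc, H, ← pow_mul]
  have hGa : coeff a G = 0 :=
    coeff_sum_C_mul_X_pow_eq_zero _ _ _ fun j _ hj =>
      sq_add_two_mul_sq_mod_eight_ne_five j 0 (by simpa [hj] using ha)
  have hHa : coeff a H = 0 :=
    coeff_sum_C_mul_X_pow_eq_zero _ _ _ fun j _ hj => by omega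
  have hGHa : coeff a (G * H) = 0 := by
    refine coeff_mul_eq_zero_of_forall fun i l hil => ?_
    by_cases hi : ∃ j ∈ Icc 1 N, j ^ 2 = i
    · obtain ⟨j, -, rfl⟩ := hi
      exact Or.inr (coeff_sum_C_mul_X_pow_eq_zero _ _ _ fun j' _ hj' =>
        sq_add_two_mul_sq_mod_eight_ne_five j j' (by rw [hj', hil, ha]))
    · simp only [not_exists, not_and] at hi
      exact Or.inl (coeff_sum_C_mul_X_pow_eq_zero _ _ _ hi)
  refine ⟨G + H + 2 * G * H, by rw [hG, hH]; ring, ?_⟩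
  rw [map_add, map_add, hGa, hHa, mul_assoc, ← map_ofNat (C (R := ℤ)) 2, coeff_C_mul, hGHa]
  simp

theorem stmt17 (n k : ℕ) : b (2 * k + 1) (8 * n + 5) ≡ 0 [ZMOD 8] := by
  obtain ⟨u, hθ, hu⟩ :=
    exists_thetaTrunc_mul_thetaTrunc_eq_one_add_two_mul (8 * n + 5) (8 * n + 5) (by omega)
  have hF := X_pow_dvd_mul_thetaTrunc_pow_sub_one (2 * k + 1) (8 * n + 5)
  rw [hθ] at hF
  have hF8 := map_dvd (PowerSeries.map (Int.castRingHom (ZMod 8))) hF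
  simp only [map_sub, map_mul, map_pow, map_add, map_one, map_X, map_ofNat] at hF8
  have h := coeff_eq_zero_of_X_pow_dvd_mul_one_add_two_mul_pow_sub_one (by decide)
    ⟨4 * n + 2, by ring⟩ (by rw [coeff_map, hu, map_zero]) hF8
  rw [← map_pow, ← map_mul, coeff_map] at h
  exact Int.modEq_zero_iff_dvd.mpr ((ZMod.intCast_zmod_eq_zero_iff_dvd _ 8).mp h)
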